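/- arXiv:1703.06729 — 2 statements merged into one kernel-verified Lean document; each statement's English description precedes it below -/
import Mathlib

section
/- Let b1, b2, b3 be rank-4 bubbles such that b3 is a connected sum of b1 and b2 (at some black node of b1 and some white node of b2). Then the bubble dimensions satisfy d̃_{b1} + d̃_{b2} ≥ d̃_{b3} + 2. -/
/-!  Rank-4 tensorial bubbles and Feynman graphs, following
Carrozza–Lahoche–Oriti, "Renormalizable Group Field Theory beyond melonic
diagrams: an example in rank four". -/

open Finset

/-- A rank-4 bubble: a connected bipartite 4-colored regular graph, given by
finite sets of black and white nodes together with, for each color, a perfect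
matching (bijection) between black and white nodes. -/
structure Bubble where
  B : Type
  W : Type
  [fB : Fintype B]
  [fW : Fintype W]
  [dB : DecidableEq B]
  [dW : DecidableEq W]
  /-- for each color `i`, the perfect matching of color `i` -/
  edge : Fin 4 → B ≃ W
  /-- connectedness: the only subsets of nodes closed under colored adjacency
  are `∅` and `univ` -/
  conn : ∀ S : Finset (B ⊕ W),
    (∀ x ∈ S, ∀ y : B ⊕ W,
      (∃ i : Fin 4, (∃ u : B, x = Sum.inl u ∧ y = Sum.inr (edge i u)) ∨
        (∃ u : B, y = Sum.inl u ∧ x = Sum.inr (edge i u))) → y ∈ S) →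
    S = ∅ ∨ S = Finset.univ

attribute [instance] Bubble.fB Bubble.fW Bubble.dB Bubble.dW

/-- The valency of a bubble: its total number of nodes. -/
def Bubble.valency (b : Bubble) : ℕ := Fintype.card b.B + Fintype.card b.W

/-- Isomorphism of bubbles (color-preserving). -/
def Bubble.Iso (b b' : Bubble) : Prop :=
  ∃ (eB : b.B ≃ b'.B) (eW : b.W ≃ b'.W), ∀ (i : Fin 4) (x : b.B),
    eW (b.edge i x) = b'.edge i (eB x)

/-- The elementary 2-valent bubble. -/
def twoValent : Bubble where
  B := PUnit
  W := PUnit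
  edge := fun _ => Equiv.refl PUnit
  conn := by
    intro S hS
    by_cases h : S = ∅
    · exact Or.inl h
    · right
      obtain ⟨x, hx⟩ := Finset.nonempty_iff_ne_empty.mpr h
      have h1 : (Sum.inl PUnit.unit : PUnit ⊕ PUnit) ∈ S := by
        rcases x with ⟨⟩ | ⟨⟩
        · exact hx
        · exact hS _ hx _ ⟨0, Or.inr ⟨PUnit.unit, rfl, rfl⟩⟩
      have h2 : (Sum.inr PUnit.unit : PUnit ⊕ PUnit) ∈ S :=
        hS _ h1 _ ⟨0, Or.inl ⟨PUnit.unit, rfl, rfl⟩⟩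
      ext y
      rcases y with ⟨⟩ | ⟨⟩ <;> simp [h1, h2]

/-- The elementary necklace in which color `1` (index `0`) is paired with the
color of index `ℓ.succ`, `ℓ : Fin 3`: its four nodes form a 4-cycle along which
double lines with the colors `{0, ℓ.succ}` alternate with double lines carrying
the complementary pair of colors. -/
def elemNecklace (ℓ : Fin 3) : Bubble where
  B := Fin 2
  W := Fin 2
  edge := fun c => if c = 0 ∨ c = ℓ.succ then Equiv.refl (Fin 2) else Equiv.swap 0 1
  conn := by fin_cases ℓ <;> decide

/-- The 4-valent melonic bubble of color `ℓ`. -/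
def melon4 (ℓ : Fin 4) : Bubble where
  B := Fin 2
  W := Fin 2
  edge := fun c => if c = ℓ then Equiv.swap 0 1 else Equiv.refl (Fin 2)
  conn := by fin_cases ℓ <;> decide

/-- The colored matchings of the connected sum of `b₁` and `b₂` at a black node
`n₁` of `b₁` and a white node `n₂` of `b₂`: delete `n₁, n₂` and join the
dangling colored half-lines according to their colors. -/
def connSumEdge (b₁ b₂ : Bubble) (n₁ : b₁.B) (n₂ : b₂.W) (i : Fin 4) :
    ({x : b₁.B // x ≠ n₁} ⊕ b₂.B) → (b₁.W ⊕ {y : b₂.W // y ≠ n₂})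
  | Sum.inl x => Sum.inl (b₁.edge i x.1)
  | Sum.inr y =>
      if h : b₂.edge i y = n₂ then Sum.inl (b₁.edge i n₁)
      else Sum.inr ⟨b₂.edge i y, h⟩

/-- `b₃` is the connected sum of `b₁` and `b₂` at `n₁` and `n₂`. -/
def IsConnSumAt (b₃ b₁ b₂ : Bubble) (n₁ : b₁.B) (n₂ : b₂.W) : Prop :=
  ∃ (eB : b₃.B ≃ ({x : b₁.B // x ≠ n₁} ⊕ b₂.B))
    (eW : b₃.W ≃ (b₁.W ⊕ {y : b₂.W // y ≠ n₂})),
    ∀ (i : Fin 4) (x : b₃.B), eW (b₃.edge i x) = connSumEdge b₁ b₂ n₁ n₂ i (eB x)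

/-- The set `𝔹` of necklace bubbles: the 2-valent bubble together with
everything generated by the three elementary necklaces under connected sums. -/
inductive IsNecklace : Bubble → Prop
  | two {b : Bubble} : b.Iso twoValent → IsNecklace b
  | elem {b : Bubble} (ℓ : Fin 3) : b.Iso (elemNecklace ℓ) → IsNecklace b
  | sum {b b₁ b₂ : Bubble} (n₁ : b₁.B) (n₂ : b₂.W) :
      IsNecklace b₁ → IsNecklace b₂ → IsConnSumAt b b₁ b₂ n₁ n₂ → IsNecklace b

/-- `(n, m)` is a `k`-dipole of the bubble `b`: `n` and `m` are joined by
exactly `k` colored lines. -/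
def Bubble.IsDipole (b : Bubble) (n : b.B) (m : b.W) (k : ℕ) : Prop :=
  (Finset.univ.filter fun i : Fin 4 => b.edge i n = m).card = k

/-- The colored matchings of the bubble obtained from `b` by contracting the
pair of nodes `(n, m)`: delete `n`, `m` and all colored lines between them, and
reconnect the dangling colored half-lines according to their colors. -/
def contractEdge (b : Bubble) (n : b.B) (m : b.W) (i : Fin 4)
    (x : {x : b.B // x ≠ n}) : {y : b.W // y ≠ m} :=
  if h : b.edge i x.1 = m then
    ⟨b.edge i n, fun hm => x.2 ((b.edge i).injective (h.trans hm.symm))⟩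
  else ⟨b.edge i x.1, h⟩

/-- `b'` is the bubble obtained from `b` by contracting the dipole `(n, m)`. -/
def Bubble.IsContractionAt (b' b : Bubble) (n : b.B) (m : b.W) : Prop :=
  ∃ (eB : b'.B ≃ {x : b.B // x ≠ n}) (eW : b'.W ≃ {y : b.W // y ≠ m}),
    ∀ (i : Fin 4) (x : b'.B), eW (b'.edge i x) = contractEdge b n m i (eB x)

/-- A Feynman graph: a finite collection of bubbles (the vertices) together
with 0-lines, each joining a black node to a white node, every node being
incident to at most one 0-line. Nodes not incident to a 0-line carry external
legs. -/
structure FGraph where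
  V : Type
  [fV : Fintype V]
  [dV : DecidableEq V]
  bub : V → Bubble
  L : Type
  [fL : Fintype L]
  [dL : DecidableEq L]
  /-- the black endpoint of a 0-line -/
  lb : L → Σ v : V, (bub v).B
  /-- the white endpoint of a 0-line -/
  lw : L → Σ v : V, (bub v).W
  lb_inj : Function.Injective lb
  lw_inj : Function.Injective lw

attribute [instance] FGraph.fV FGraph.dV FGraph.fL FGraph.dL

/-- The black nodes of a Feynman graph. -/
abbrev FGraph.NB (G : FGraph) : Type := Σ v : G.V, (G.bub v).B

/-- The white nodes of a Feynman graph. -/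
abbrev FGraph.NW (G : FGraph) : Type := Σ v : G.V, (G.bub v).W

/-- The colored line of color `i` leaving the black node `x`. -/
def FGraph.colorMap (G : FGraph) (i : Fin 4) (x : G.NB) : G.NW :=
  ⟨x.1, (G.bub x.1).edge i x.2⟩

/-- `L(𝒢)`: the number of 0-lines. -/
def FGraph.numL (G : FGraph) : ℕ := Fintype.card G.L

/-- `V(𝒢)`: the number of vertices (bubbles). -/
def FGraph.numV (G : FGraph) : ℕ := Fintype.card G.V

/-- `N(𝒢)`: the number of external legs. -/
def FGraph.numN (G : FGraph) : ℕ :=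
  (Fintype.card G.NB - Fintype.card G.L) + (Fintype.card G.NW - Fintype.card G.L)

/-- `l'` is the successor of `l` in the face of color `i`: the white endpoint
of `l'` is joined by a color-`i` line to the black endpoint of `l`. -/
def FGraph.NextRel (G : FGraph) (i : Fin 4) (l l' : G.L) : Prop :=
  G.lw l' = G.colorMap i (G.lb l)

/-- `C` is (the set of 0-lines of) an internal face of color `i`: a cycle of
the successor relation, i.e. a minimal nonempty set in which every 0-line has
its successor. -/
def FGraph.IsFace (G : FGraph) (i : Fin 4) (C : Finset G.L) : Prop :=
  C.Nonempty ∧ (∀ l ∈ C, ∃ l' ∈ C, G.NextRel i l l') ∧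
    ∀ D : Finset G.L, D ⊆ C → D.Nonempty →
      (∀ l ∈ D, ∃ l' ∈ D, G.NextRel i l l') → D = C

/-- `F(𝒢)`: the number of internal faces. -/
noncomputable def FGraph.numF (G : FGraph) : ℕ :=
  Set.ncard {p : Fin 4 × Finset G.L | G.IsFace p.1 p.2}

open Classical in
/-- The line/face incidence matrix `ε`, with internal faces coherently oriented
so that every 0-line occurs in a face it belongs to with matching
orientation. -/
noncomputable def FGraph.epsMat (G : FGraph) :
    Matrix G.L (Fin 4 × Finset G.L) ℚ :=
  fun l p => if G.IsFace p.1 p.2 ∧ l ∈ p.2 then 1 else 0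

/-- `R(𝒢)`: the rank of the incidence matrix `ε` over `ℚ`. -/
noncomputable def FGraph.numR (G : FGraph) : ℕ := G.epsMat.rank

/-- The Abelian degree of divergence `ω(𝒢) = -2L + 3(F - R)`. -/
noncomputable def FGraph.omega (G : FGraph) : ℤ :=
  -2 * (G.numL : ℤ) + 3 * ((G.numF : ℤ) - (G.numR : ℤ))

/-- `ρ(𝒢) = (L - V + 1) - (F - R)`. -/
noncomputable def FGraph.rho (G : FGraph) : ℤ :=
  ((G.numL : ℤ) - (G.numV : ℤ) + 1) - ((G.numF : ℤ) - (G.numR : ℤ))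

/-- Adjacency of the vertices `a, b` through a 0-line belonging to `T`. -/
def FGraph.VAdjOn (G : FGraph) (T : Finset G.L) (a b : G.V) : Prop :=
  ∃ l ∈ T, ((G.lb l).1 = a ∧ (G.lw l).1 = b) ∨ ((G.lb l).1 = b ∧ (G.lw l).1 = a)

/-- Adjacency of the vertices `a, b` through some 0-line. -/
def FGraph.VAdj (G : FGraph) (a b : G.V) : Prop :=
  ∃ l : G.L, ((G.lb l).1 = a ∧ (G.lw l).1 = b) ∨ ((G.lb l).1 = b ∧ (G.lw l).1 = a)

/-- Connectedness of a Feynman graph. -/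
def FGraph.Connected (G : FGraph) : Prop :=
  Nonempty G.V ∧ ∀ v v' : G.V, Relation.ReflTransGen G.VAdj v v'

/-- `T` is a spanning tree of 0-lines of `𝒢`. -/
def FGraph.IsSpanningTree (G : FGraph) (T : Finset G.L) : Prop :=
  T.card + 1 = Fintype.card G.V ∧
    ∀ v v' : G.V, Relation.ReflTransGen (G.VAdjOn T) v v'

/-- Rerouting of a color-`i` half-line through the contracted lines `T`:
as long as the reached white node is an endpoint of a contracted line, jump to
the color-`i` line leaving the black endpoint of that contracted line. -/
noncomputable def FGraph.reroute (G : FGraph) (T : Finset G.L) (i : Fin 4) :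
    ℕ → G.NW → G.NW
  | 0, w => w
  | fuel + 1, w =>
      if h : ∃ l ∈ T, G.lw l = w then
        G.reroute T i fuel (G.colorMap i (G.lb h.choose))
      else w

/-- `G'` is the Feynman graph obtained from `G` by contracting all the 0-lines
of `T` (deleting their end nodes and the colored lines between them, and
reconnecting the dangling colored half-lines by colors). -/
def FGraph.IsQuotientBy (G' G : FGraph) (T : Finset G.L) : Prop :=
  ∃ (eL : G'.L ≃ {l : G.L // l ∉ T})
    (eB : G'.NB ≃ {x : G.NB // ∀ l ∈ T, G.lb l ≠ x})
    (eW : G'.NW ≃ {y : G.NW // ∀ l ∈ T, G.lw l ≠ y}),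
    (∀ l' : G'.L,
      (eB (G'.lb l')).1 = G.lb (eL l').1 ∧ (eW (G'.lw l')).1 = G.lw (eL l').1) ∧
    ∀ (i : Fin 4) (x : G'.NB),
      (eW (G'.colorMap i x)).1 = G.reroute T i T.card (G.colorMap i (eB x).1)

/-- `G'` is the Feynman graph obtained from `G` by contracting the 0-line `l`. -/
def FGraph.IsContractionAt (G' G : FGraph) (l : G.L) : Prop :=
  FGraph.IsQuotientBy G' G {l}

/-- The 0-line `l` is a `k`-dipole: its two end nodes are joined by exactly
`k - 1` colored lines. -/
def FGraph.IsDipoleLine (G : FGraph) (l : G.L) (k : ℕ) : Prop :=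
  (Finset.univ.filter fun i : Fin 4 => G.colorMap i (G.lb l) = G.lw l).card = k - 1

/-- A Feynman graph is 3-dipole contractible if its 0-lines can be contracted
one after the other, each being a 3-dipole at the moment of its contraction. -/
inductive DipoleContractible : FGraph → Prop
  | nil {G : FGraph} : Fintype.card G.L = 0 → DipoleContractible G
  | step {G G' : FGraph} (l : G.L) : G.IsDipoleLine l 3 →
      FGraph.IsContractionAt G' G l → DipoleContractible G' → DipoleContractible G

/-- A necklace graph: a connected Feynman graph all of whose vertices are
necklace bubbles. -/
def FGraph.IsNecklaceGraph (G : FGraph) : Prop :=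
  G.Connected ∧ ∀ v : G.V, IsNecklace (G.bub v)

/-- `r ∈ ℛ₂(b)`: a Feynman graph with a single vertex `b` and exactly two
external legs. -/
def IsR2 (r : FGraph) (b : Bubble) : Prop :=
  Fintype.card r.V = 1 ∧ (∀ v : r.V, (r.bub v).Iso b) ∧ r.numN = 2

/-- `M = max_{r ∈ ℛ₂(b)} ω(r)`. -/
def IsMaxOmega2 (b : Bubble) (M : ℤ) : Prop :=
  (∃ r : FGraph, IsR2 r b ∧ r.omega = M) ∧ ∀ r : FGraph, IsR2 r b → r.omega ≤ M

/-- The bubble dimension `d̃_b = 2 - max_{r ∈ ℛ₂(b)} ω(r)`. -/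
def HasBubbleDim (b : Bubble) (d : ℤ) : Prop :=
  ∃ M : ℤ, IsMaxOmega2 b M ∧ d = 2 - M

open Classical in
/-- The (unique, if any) successor of the 0-line `l` in the face of color `i`. -/
noncomputable def FGraph.nextL (G : FGraph) (i : Fin 4) (l : G.L) : Option G.L :=
  if h : ∃ l' : G.L, G.NextRel i l l' then some h.choose else none

/-- The ordered product of the group elements attached to the `k` consecutive
0-lines of the face of color `i` starting at `l`. -/
noncomputable def FGraph.holPath (G : FGraph) {Γ : Type*} [Monoid Γ]
    (h : G.L → Γ) (i : Fin 4) : ℕ → G.L → Γ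
  | 0, _ => 1
  | k + 1, l => h l * (G.nextL i l).elim 1 (fun l' => FGraph.holPath G h i k l')

/-!
A maximizing two-point graph of a bubble `b` may be taken to have the single vertex `b`,
its 0-lines forming a partial matching of the nodes. Joining its two external legs by a
0-line gives a vacuum graph, whose color-`i` faces are the cycles of a permutation. Deleting
any 0-line of a vacuum graph lowers `ω` by exactly `7`, so the external legs of an optimal
graph can be moved to any 0-line, in particular to the node `n₁` of `b₁` and to the node `n₂`
of `b₂`. Gluing these two graphs along the connected sum gives a two-point graph of `b₃`
containing both as line-disjoint subgraphs. `L` adds up and `F - R` (the number of linear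
relations among the face vectors) is superadditive, hence
`max ω(b₃) ≥ max ω(b₁) + max ω(b₂)`.
-/

open Submodule Module

section SpanDefect

variable (K : Type*) {V W ι κ : Type*} [DivisionRing K] [AddCommGroup V] [Module K V]
  [AddCommGroup W] [Module K W]

/-- The number of independent linear relations among the vectors `v i`, `i ∈ s`. -/
noncomputable def spanDefect (v : ι → V) (s : Set ι) : ℤ :=
  s.ncard - finrank K (span K (v '' s))

variable {K} {v : ι → V} {s t : Set ι}

lemma finrank_span_image_le_ncard (hs : s.Finite) :
    finrank K (span K (v '' s)) ≤ s.ncard := by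
  have hvs : (v '' s).Finite := hs.image v
  have := hvs.fintype
  calc finrank K (span K (v '' s)) ≤ (v '' s).toFinset.card := finrank_span_le_card _
    _ = (v '' s).ncard := (Set.ncard_eq_toFinset_card' _).symm
    _ ≤ s.ncard := Set.ncard_image_le hs

lemma spanDefect_nonneg (hs : s.Finite) : 0 ≤ spanDefect K v s := by
  have := finrank_span_image_le_ncard (K := K) (v := v) hs
  unfold spanDefect
  omega

lemma spanDefect_add_le_union [FiniteDimensional K V] (hs : s.Finite) (ht : t.Finite)
    (hst : Disjoint s t) :
    spanDefect K v s + spanDefect K v t ≤ spanDefect K v (s ∪ t) := by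
  have hrank := finrank_add_le_finrank_add_finrank (span K (v '' s)) (span K (v '' t))
  rw [← span_union, ← Set.image_union] at hrank
  unfold spanDefect
  rw [Set.ncard_union_eq hst hs ht]
  push_cast
  omega

lemma spanDefect_mono [FiniteDimensional K V] (ht : t.Finite) (hst : s ⊆ t) :
    spanDefect K v s ≤ spanDefect K v t := by
  have hunion : s ∪ (t \ s) = t := Set.union_sdiff_cancel hst
  calc spanDefect K v s ≤ spanDefect K v s + spanDefect K v (t \ s) :=
        le_add_of_nonneg_right (spanDefect_nonneg (ht.sdiff))
    _ ≤ spanDefect K v t := by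
        simpa only [hunion] using
          spanDefect_add_le_union (ht.subset hst) ht.sdiff Set.disjoint_sdiff_right

lemma spanDefect_image {f : V →ₗ[K] W} (hf : Function.Injective f)
    {j : ι → κ} (hj : Set.InjOn j s) {w : κ → W} (hw : ∀ i ∈ s, w (j i) = f (v i)) :
    spanDefect K w (j '' s) = spanDefect K v s := by
  have himage : w '' (j '' s) = f '' (v '' s) := by
    rw [← Set.image_comp, ← Set.image_comp]
    exact Set.image_congr hw
  unfold spanDefect
  rw [hj.ncard_image, himage, span_image,
    (equivMapOfInjective f hf _).finrank_eq.symm]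

end SpanDefect

namespace FGraph

variable {G H : FGraph}

def faces (G : FGraph) : Set (Fin 4 × Finset G.L) := {p | G.IsFace p.1 p.2}

lemma faces_finite (G : FGraph) : G.faces.Finite := Set.toFinite _

lemma epsMat_col_of_mem_faces {p : Fin 4 × Finset G.L} (hp : p ∈ G.faces) (l : G.L) :
    G.epsMat.col p l = if l ∈ p.2 then 1 else 0 := by
  simp [Matrix.col, epsMat, show G.IsFace p.1 p.2 from hp]

lemma numF_sub_numR (G : FGraph) :
    (G.numF : ℤ) - G.numR = spanDefect ℚ G.epsMat.col G.faces := by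
  have hcols : Set.range G.epsMat.col ⊆ insert 0 (G.epsMat.col '' G.faces) := by
    rintro - ⟨p, rfl⟩
    by_cases hp : p ∈ G.faces
    · exact Or.inr ⟨p, hp, rfl⟩
    · refine Or.inl (funext fun l => ?_)
      simp [Matrix.col, epsMat, show ¬G.IsFace p.1 p.2 from hp]
  have hspan : span ℚ (Set.range G.epsMat.col) = span ℚ (G.epsMat.col '' G.faces) :=
    le_antisymm ((span_mono hcols).trans_eq span_insert_zero)
      (span_mono (Set.image_subset_range _ _))
  rw [spanDefect, numR, Matrix.rank_eq_finrank_span_cols, hspan]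
  rfl

def NextEmb (φ : G.L ↪ H.L) : Prop :=
  ∀ (i : Fin 4) (l l' : G.L), H.NextRel i (φ l) (φ l') ↔ G.NextRel i l l'

def mapFace (φ : G.L ↪ H.L) (p : Fin 4 × Finset G.L) : Fin 4 × Finset H.L :=
  (p.1, p.2.map φ)

lemma mapFace_injective (φ : G.L ↪ H.L) : Function.Injective (mapFace φ) :=
  Function.Injective.prodMap Function.injective_id (Finset.map_injective φ)

variable {φ : G.L ↪ H.L}

lemma IsFace.map (hφ : NextEmb φ) {i : Fin 4} {C : Finset G.L} (hC : G.IsFace i C) :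
    H.IsFace i (C.map φ) := by
  obtain ⟨hne, hcl, hmin⟩ := hC
  refine ⟨hne.map, ?_, fun D hD hDne hDcl => ?_⟩
  · simp only [Finset.mem_map, forall_exists_index, and_imp, exists_exists_and_eq_and]
    rintro - a ha rfl
    obtain ⟨a', ha', hrel⟩ := hcl a ha
    exact ⟨a', ha', (hφ i a a').2 hrel⟩
  · classical
    have hpre : C.filter (φ · ∈ D) = C := by
      refine hmin _ (Finset.filter_subset _ _) ?_ ?_
      · obtain ⟨x, hx⟩ := hDne
        obtain ⟨a, ha, rfl⟩ := Finset.mem_map.1 (hD hx)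
        exact ⟨a, Finset.mem_filter.2 ⟨ha, hx⟩⟩
      · intro a ha
        obtain ⟨-, haD⟩ := Finset.mem_filter.1 ha
        obtain ⟨x, hxD, hrel⟩ := hDcl (φ a) haD
        obtain ⟨a', ha', rfl⟩ := Finset.mem_map.1 (hD hxD)
        exact ⟨a', Finset.mem_filter.2 ⟨ha', hxD⟩, (hφ i a a').1 hrel⟩
    refine Finset.Subset.antisymm hD fun x hx => ?_
    obtain ⟨a, ha, rfl⟩ := Finset.mem_map.1 hx
    rw [← hpre] at ha
    exact (Finset.mem_filter.1 ha).2

lemma IsFace.exists_map (hφ : NextEmb φ) {i : Fin 4} {C : Finset H.L} (hC : H.IsFace i C)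
    (hCφ : ∀ x ∈ C, x ∈ Set.range φ) : ∃ C' : Finset G.L, G.IsFace i C' ∧ C'.map φ = C := by
  classical
  have hmapC : (Finset.univ.filter (φ · ∈ C)).map φ = C := by
    ext x
    simp only [Finset.mem_map, Finset.mem_filter, Finset.mem_univ, true_and]
    refine ⟨by rintro ⟨a, ha, rfl⟩; exact ha, fun hx => ?_⟩
    obtain ⟨a, rfl⟩ := hCφ x hx
    exact ⟨a, hx, rfl⟩
  refine ⟨_, ⟨?_, ?_, fun D hD hDne hDcl => ?_⟩, hmapC⟩
  · obtain ⟨x, hx⟩ := hC.1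
    obtain ⟨a, rfl⟩ := hCφ x hx
    exact ⟨a, by simpa using hx⟩
  · intro a ha
    obtain ⟨x, hx, hrel⟩ := hC.2.1 (φ a) (by simpa using ha)
    obtain ⟨a', rfl⟩ := hCφ x hx
    exact ⟨a', by simpa using hx, (hφ i a a').1 hrel⟩
  · have himg : D.map φ = C := by
      refine hC.2.2 _ (hmapC ▸ Finset.map_subset_map.2 hD) hDne.map ?_
      simp only [Finset.mem_map, forall_exists_index, and_imp, exists_exists_and_eq_and]
      rintro - a ha rfl
      obtain ⟨a', ha', hrel⟩ := hDcl a ha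
      exact ⟨a', ha', (hφ i a a').2 hrel⟩
    rw [← hmapC] at himg
    exact Finset.map_injective φ himg

lemma image_mapFace_faces (hφ : NextEmb φ) :
    mapFace φ '' G.faces = {q ∈ H.faces | ∀ x ∈ q.2, x ∈ Set.range φ} := by
  ext ⟨i, C⟩
  constructor
  · rintro ⟨⟨i, C'⟩, hC', he⟩
    simp only [mapFace, Prod.mk.injEq] at he
    obtain ⟨rfl, rfl⟩ := he
    refine ⟨IsFace.map hφ hC', fun x hx => ?_⟩
    obtain ⟨a, -, rfl⟩ := Finset.mem_map.1 hx
    exact ⟨a, rfl⟩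
  · rintro ⟨hC, hCφ⟩
    obtain ⟨C', hC', rfl⟩ := IsFace.exists_map hφ hC hCφ
    exact ⟨(i, C'), hC', rfl⟩

lemma epsMat_col_mapFace (hφ : NextEmb φ) {p : Fin 4 × Finset G.L} (hp : p ∈ G.faces) :
    H.epsMat.col (mapFace φ p) = Function.ExtendByZero.linearMap ℚ φ (G.epsMat.col p) := by
  funext x
  have hq : mapFace φ p ∈ H.faces := IsFace.map hφ hp
  rw [epsMat_col_of_mem_faces hq, Function.ExtendByZero.linearMap_apply]
  by_cases hx : ∃ a, φ a = x
  · obtain ⟨a, rfl⟩ := hx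
    rw [φ.injective.extend_apply, epsMat_col_of_mem_faces hp]
    simp [mapFace]
  · rw [Function.extend_apply' _ _ _ hx]
    simp only [mapFace, Finset.mem_map, Pi.zero_apply, ite_eq_right_iff]
    rintro ⟨a, -, rfl⟩
    exact absurd ⟨a, rfl⟩ hx

lemma spanDefect_image_mapFace (hφ : NextEmb φ) :
    spanDefect ℚ H.epsMat.col (mapFace φ '' G.faces) = spanDefect ℚ G.epsMat.col G.faces :=
  spanDefect_image (Function.extend_injective φ.injective 0) (mapFace_injective φ).injOn
    fun _ hp => epsMat_col_mapFace hφ hp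

lemma numF_sub_numR_le (hφ : NextEmb φ) :
    (G.numF : ℤ) - G.numR ≤ (H.numF : ℤ) - H.numR := by
  rw [numF_sub_numR, numF_sub_numR, ← spanDefect_image_mapFace hφ]
  refine spanDefect_mono H.faces_finite ?_
  rw [image_mapFace_faces hφ]
  exact Set.sep_subset _ _

lemma numF_sub_numR_add_le {G₁ G₂ : FGraph} {φ₁ : G₁.L ↪ H.L} {φ₂ : G₂.L ↪ H.L}
    (hφ₁ : NextEmb φ₁) (hφ₂ : NextEmb φ₂) (hdisj : Disjoint (Set.range φ₁) (Set.range φ₂)) :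
    ((G₁.numF : ℤ) - G₁.numR) + ((G₂.numF : ℤ) - G₂.numR) ≤ (H.numF : ℤ) - H.numR := by
  have hsub : ∀ {G : FGraph} {φ : G.L ↪ H.L}, NextEmb φ → mapFace φ '' G.faces ⊆ H.faces :=
    fun hφ => (image_mapFace_faces hφ).symm ▸ Set.sep_subset _ _
  have hfaces : Disjoint (mapFace φ₁ '' G₁.faces) (mapFace φ₂ '' G₂.faces) := by
    rw [image_mapFace_faces hφ₁, image_mapFace_faces hφ₂, Set.disjoint_left]
    rintro q ⟨hq, hq₁⟩ ⟨-, hq₂⟩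
    obtain ⟨x, hx⟩ := hq.1
    exact Set.disjoint_left.1 hdisj (hq₁ x hx) (hq₂ x hx)
  rw [numF_sub_numR, numF_sub_numR, numF_sub_numR, ← spanDefect_image_mapFace hφ₁,
    ← spanDefect_image_mapFace hφ₂]
  calc _ ≤ spanDefect ℚ H.epsMat.col (mapFace φ₁ '' G₁.faces ∪ mapFace φ₂ '' G₂.faces) :=
        spanDefect_add_le_union (G₁.faces_finite.image _) (G₂.faces_finite.image _) hfaces
    _ ≤ _ := spanDefect_mono H.faces_finite (Set.union_subset (hsub hφ₁) (hsub hφ₂))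

lemma omega_eq_of_equiv (e : G.L ≃ H.L) (he : NextEmb e.toEmbedding) : G.omega = H.omega := by
  have he' : NextEmb e.symm.toEmbedding := fun i l l' => by
    simpa using (he i (e.symm l) (e.symm l')).symm
  have hL : G.numL = H.numL := Fintype.card_congr e
  have h₁ := numF_sub_numR_le he
  have h₂ := numF_sub_numR_le he'
  simp only [omega, hL]
  omega

end FGraph

lemma Equiv.Perm.filter_sameCycle_subset {α : Type*} [Fintype α] [DecidableEq α]
    {σ : Equiv.Perm α} {D : Finset α} (hD : Set.MapsTo σ D D) {l : α} (hl : l ∈ D) :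
    Finset.univ.filter (σ.SameCycle l) ⊆ D := by
  intro x hx
  obtain ⟨k, -, rfl⟩ := (Finset.mem_filter.1 hx).2.exists_pow_eq'
  rw [Equiv.Perm.coe_pow]
  exact hD.iterate k hl

namespace FGraph

/-- `G` is a vacuum graph whose color-`i` successor map is the permutation `σ i`. -/
def IsNextPerm (G : FGraph) (σ : Fin 4 → Equiv.Perm G.L) : Prop :=
  ∀ (i : Fin 4) (l l' : G.L), G.NextRel i l l' ↔ σ i l = l'

section PermutationFaces

variable {G : FGraph} {σ : Fin 4 → Equiv.Perm G.L}

lemma isFace_filter_sameCycle (hσ : G.IsNextPerm σ) (i : Fin 4)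
    (l : G.L) : G.IsFace i (Finset.univ.filter ((σ i).SameCycle l)) := by
  refine ⟨⟨l, by simp [Equiv.Perm.SameCycle.refl]⟩, fun x hx => ⟨σ i x, ?_, (hσ i x _).2 rfl⟩,
    fun D hD hDne hDcl => ?_⟩
  · simpa using (Finset.mem_filter.1 hx).2.apply_right
  · obtain ⟨z, hz⟩ := hDne
    have hmaps : Set.MapsTo (σ i) D D := fun x hx => by
      obtain ⟨x', hx', hrel⟩ := hDcl x hx
      rwa [← (hσ i x x').1 hrel] at hx'
    have hlz : (σ i).SameCycle l z := (Finset.mem_filter.1 (hD hz)).2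
    refine Finset.Subset.antisymm hD ?_
    convert Equiv.Perm.filter_sameCycle_subset hmaps hz using 2
    exact ⟨hlz.symm.trans, hlz.trans⟩

lemma IsFace.eq_filter_sameCycle (hσ : G.IsNextPerm σ) {i : Fin 4}
    {C : Finset G.L} (hC : G.IsFace i C) {l : G.L} (hl : l ∈ C) :
    C = Finset.univ.filter ((σ i).SameCycle l) := by
  have hmaps : Set.MapsTo (σ i) C C := fun x hx => by
    obtain ⟨x', hx', hrel⟩ := hC.2.1 x hx
    rwa [← (hσ i x x').1 hrel] at hx'
  exact (hC.2.2 _ (Equiv.Perm.filter_sameCycle_subset hmaps hl)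
    ⟨l, by simp [Equiv.Perm.SameCycle.refl]⟩ (isFace_filter_sameCycle hσ i l).2.1).symm

/-- Every 0-line lies in exactly one face of each color. -/
lemma sum_epsMat_col_color (hσ : G.IsNextPerm σ) (i : Fin 4) :
    ∑ p ∈ G.faces_finite.toFinset.filter (·.1 = i), G.epsMat.col p = 1 := by
  classical
  funext l
  have hterm : ∀ p ∈ G.faces_finite.toFinset.filter (·.1 = i),
      G.epsMat.col p l = if l ∈ p.2 then 1 else 0 := fun p hp =>
    epsMat_col_of_mem_faces (Set.Finite.mem_toFinset _ |>.1 (Finset.mem_filter.1 hp).1) l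
  have hfilter : (G.faces_finite.toFinset.filter (·.1 = i)).filter (l ∈ ·.2) =
      {(i, Finset.univ.filter ((σ i).SameCycle l))} := by
    ext ⟨j, C⟩
    simp only [Finset.mem_filter, Set.Finite.mem_toFinset, Finset.mem_singleton, Prod.mk.injEq]
    constructor
    · rintro ⟨⟨hC, rfl⟩, hl⟩
      exact ⟨rfl, IsFace.eq_filter_sameCycle hσ hC hl⟩
    · rintro ⟨rfl, rfl⟩
      exact ⟨⟨isFace_filter_sameCycle hσ j l, rfl⟩, by simp [Equiv.Perm.SameCycle.refl]⟩
  rw [Finset.sum_apply, Finset.sum_congr rfl hterm, Finset.sum_boole, hfilter]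
  simp

variable (σ) in
/-- The four faces through the 0-line `l₀`, one of each color. -/
def facesThrough (l₀ : G.L) : Set (Fin 4 × Finset G.L) :=
  Set.range fun i => (i, Finset.univ.filter ((σ i).SameCycle l₀))

lemma faces_eq_sep_union_facesThrough (hσ : G.IsNextPerm σ) (l₀ : G.L) :
    G.faces = {q ∈ G.faces | l₀ ∉ q.2} ∪ facesThrough σ l₀ := by
  ext ⟨i, C⟩
  constructor
  · intro hC
    by_cases h : l₀ ∈ C
    · exact Or.inr ⟨i, congrArg _ (IsFace.eq_filter_sameCycle hσ hC h).symm⟩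
    · exact Or.inl ⟨hC, h⟩
  · rintro (⟨hC, -⟩ | ⟨i, he⟩)
    · exact hC
    · rw [← he]
      exact isFace_filter_sameCycle hσ i l₀

lemma span_faces_eq_sup (hσ : G.IsNextPerm σ) (l₀ : G.L) :
    span ℚ (G.epsMat.col '' G.faces) =
      span ℚ (G.epsMat.col '' {q ∈ G.faces | l₀ ∉ q.2}) ⊔ span ℚ {1} := by
  classical
  set U₀ := span ℚ (G.epsMat.col '' {q ∈ G.faces | l₀ ∉ q.2})
  have hsum := sum_epsMat_col_color hσ
  refine le_antisymm (span_le.2 ?_)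
    (sup_le (span_mono (Set.image_mono (Set.sep_subset _ _))) ?_)
  · rintro - ⟨q, hq, rfl⟩
    by_cases h : l₀ ∈ q.2
    · -- the face through `l₀` is the all-ones vector minus the other faces of its color
      set Φ := G.faces_finite.toFinset.filter (·.1 = q.1)
      have hqΦ : q ∈ Φ := Finset.mem_filter.2 ⟨(Set.Finite.mem_toFinset _).2 hq, rfl⟩
      have hrest : ∑ p ∈ Φ.erase q, G.epsMat.col p ∈ U₀ := by
        refine sum_mem fun p hp => subset_span ⟨p, ⟨?_, fun hp₀ => ?_⟩, rfl⟩
        · exact (Set.Finite.mem_toFinset _).1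
            (Finset.mem_filter.1 (Finset.mem_of_mem_erase hp)).1
        · obtain ⟨hpq, hpΦ⟩ := Finset.mem_erase.1 hp
          obtain ⟨hpf, hp1⟩ := Finset.mem_filter.1 hpΦ
          have hpface : p ∈ G.faces := (Set.Finite.mem_toFinset _).1 hpf
          refine hpq (Prod.ext hp1 ?_)
          rw [IsFace.eq_filter_sameCycle hσ hpface hp₀,
            IsFace.eq_filter_sameCycle hσ hq h, hp1]
      have hq_eq : G.epsMat.col q = 1 - ∑ p ∈ Φ.erase q, G.epsMat.col p := by
        rw [← hsum q.1, ← Finset.add_sum_erase Φ _ hqΦ, add_sub_cancel_right]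
      rw [SetLike.mem_coe, hq_eq]
      exact sub_mem (mem_sup_right (mem_span_singleton_self _)) (mem_sup_left hrest)
    · exact mem_sup_left (subset_span ⟨q, ⟨hq, h⟩, rfl⟩)
  · rw [span_singleton_le_iff_mem, ← hsum 0]
    exact sum_mem fun p hp =>
      subset_span ⟨p, (Set.Finite.mem_toFinset _).1 (Finset.mem_filter.1 hp).1, rfl⟩

lemma one_notMem_span_avoiding (l₀ : G.L) :
    (1 : G.L → ℚ) ∉ span ℚ (G.epsMat.col '' {q ∈ G.faces | l₀ ∉ q.2}) := by
  intro h
  have hker : span ℚ (G.epsMat.col '' {q ∈ G.faces | l₀ ∉ q.2}) ≤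
      LinearMap.ker (LinearMap.proj l₀ : (G.L → ℚ) →ₗ[ℚ] ℚ) := by
    rw [span_le]
    rintro - ⟨q, ⟨hq, hl₀⟩, rfl⟩
    simpa using (epsMat_col_of_mem_faces hq l₀).trans (if_neg hl₀)
  simpa using hker h

lemma spanDefect_faces_eq_add_three (hσ : G.IsNextPerm σ) (l₀ : G.L) :
    spanDefect ℚ G.epsMat.col G.faces =
      spanDefect ℚ G.epsMat.col {q ∈ G.faces | l₀ ∉ q.2} + 3 := by
  have hdisj : Disjoint {q ∈ G.faces | l₀ ∉ q.2} (facesThrough σ l₀) := by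
    rw [Set.disjoint_left]
    rintro q ⟨-, hq⟩ ⟨i, rfl⟩
    exact hq (by simp [Equiv.Perm.SameCycle.refl])
  have hthrough : (facesThrough σ l₀).ncard = 4 := by
    rw [facesThrough, Set.ncard_range_of_injective fun i j h => congrArg Prod.fst h]
    simp
  have hcard : G.faces.ncard = {q ∈ G.faces | l₀ ∉ q.2}.ncard + 4 := by
    conv_lhs => rw [faces_eq_sep_union_facesThrough hσ l₀]
    rw [Set.ncard_union_eq hdisj (Set.toFinite _) (Set.toFinite _), hthrough]
  have hrank := finrank_sup_span_singleton (one_notMem_span_avoiding (G := G) l₀)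
  rw [← span_faces_eq_sup hσ] at hrank
  simp only [spanDefect, hcard, hrank]
  push_cast
  ring

/-- Deleting a 0-line from a vacuum graph lowers `ω` by `7`: `L` drops by one, the four
faces through the line disappear, and the rank drops by one since the all-ones vector
(the sum of the faces of any one color) leaves the span. -/
theorem omega_eq_sub_seven (hσ : G.IsNextPerm σ) {G' : FGraph}
    {φ : G'.L ↪ G.L} (hφ : NextEmb φ) {l₀ : G.L} (hrange : Set.range φ = {l₀}ᶜ) :
    G'.omega = G.omega - 7 := by
  have hFR' :
      (G'.numF : ℤ) - G'.numR = spanDefect ℚ G.epsMat.col {q ∈ G.faces | l₀ ∉ q.2} := by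
    rw [numF_sub_numR, ← spanDefect_image_mapFace hφ, image_mapFace_faces hφ, hrange]
    simp
  have hL : G'.numL + 1 = G.numL := by
    have hcard := Set.ncard_range_of_injective φ.injective
    rw [hrange, Set.ncard_compl, Set.ncard_singleton] at hcard
    have hpos : 0 < Nat.card G.L := Nat.card_pos_iff.2 ⟨⟨l₀⟩, inferInstance⟩
    simp only [numL, ← Nat.card_eq_fintype_card]
    omega
  have hFR := numF_sub_numR G
  rw [spanDefect_faces_eq_add_three hσ l₀, ← hFR'] at hFR
  simp only [omega]
  omega

end PermutationFaces

end FGraph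

namespace Bubble

variable {b : Bubble} {L : Type} [Fintype L] [DecidableEq L]

def graphOf (b : Bubble) (f : L ↪ b.B) (g : L ↪ b.W) : FGraph where
  V := PUnit
  bub _ := b
  L := L
  lb l := ⟨PUnit.unit, f l⟩
  lw l := ⟨PUnit.unit, g l⟩
  lb_inj _ _ h := f.injective (eq_of_heq (Sigma.mk.inj h).2)
  lw_inj _ _ h := g.injective (eq_of_heq (Sigma.mk.inj h).2)

lemma graphOf_nextRel (f : L ↪ b.B) (g : L ↪ b.W) (i : Fin 4) (l l' : L) :
    (b.graphOf f g).NextRel i l l' ↔ g l' = b.edge i (f l) := by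
  simp only [FGraph.NextRel, FGraph.colorMap, graphOf, Sigma.mk.inj_iff, heq_eq_eq, true_and]
  exact Iff.rfl

lemma card_W_eq_card_B (b : Bubble) : Fintype.card b.W = Fintype.card b.B :=
  (Fintype.card_congr (b.edge 0)).symm

lemma isR2_graphOf (f : L ↪ b.B) (g : L ↪ b.W) (hL : Fintype.card L + 1 = Fintype.card b.B) :
    IsR2 (b.graphOf f g) b := by
  refine ⟨Fintype.card_punit, fun _ => ⟨Equiv.refl _, Equiv.refl _, fun _ _ => rfl⟩, ?_⟩
  have hB : Fintype.card (b.graphOf f g).NB = Fintype.card b.B :=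
    Fintype.card_congr (Equiv.uniqueSigma fun _ : PUnit => b.B)
  have hW : Fintype.card (b.graphOf f g).NW = Fintype.card b.B :=
    (Fintype.card_congr (Equiv.uniqueSigma fun _ : PUnit => b.W)).trans b.card_W_eq_card_B
  have hLcard : Fintype.card (b.graphOf f g).L = Fintype.card L := rfl
  rw [FGraph.numN, hB, hW, hLcard]
  omega

lemma _root_.IsR2.exists_graphOf {r : FGraph} (hr : IsR2 r b) :
    ∃ (f : r.L ↪ b.B) (g : r.L ↪ b.W),
      Fintype.card r.L + 1 = Fintype.card b.B ∧ (b.graphOf f g).omega = r.omega := by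
  obtain ⟨hV, hiso, hN⟩ := hr
  have : Unique r.V := (Fintype.card_eq_one_iff_nonempty_unique.1 hV).some
  obtain ⟨eB, eW, hedge⟩ := hiso default
  let EB : r.NB ≃ b.B := (Equiv.uniqueSigma _).trans eB
  let EW : r.NW ≃ b.W := (Equiv.uniqueSigma _).trans eW
  have hcolor : ∀ i x, EW (r.colorMap i x) = b.edge i (EB x) := by
    rintro i ⟨v, a⟩
    obtain rfl := Subsingleton.elim v default
    exact hedge i a
  refine ⟨⟨EB ∘ r.lb, EB.injective.comp r.lb_inj⟩, ⟨EW ∘ r.lw, EW.injective.comp r.lw_inj⟩,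
    ?_, FGraph.omega_eq_of_equiv (Equiv.refl r.L) fun i l l' => ?_⟩
  · have hB : Fintype.card r.NB = Fintype.card b.B := Fintype.card_congr EB
    have hW : Fintype.card r.NW = Fintype.card b.B :=
      (Fintype.card_congr EW).trans b.card_W_eq_card_B
    have hLB := Fintype.card_le_of_injective r.lb r.lb_inj
    rw [FGraph.numN, hB, hW] at hN
    omega
  · exact ((graphOf_nextRel _ _ i l l').trans (EW.injective.eq_iff' (hcolor i _))).symm

/-- The vacuum graph of the pairing `π`, opened at the 0-line leaving `n`. -/
abbrev openedGraph (b : Bubble) (π : b.B ≃ b.W) (n : b.B) : FGraph :=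
  b.graphOf (Function.Embedding.subtype (· ≠ n))
    ((Function.Embedding.subtype _).trans π.toEmbedding)

lemma omega_openedGraph (π : b.B ≃ b.W) (n : b.B) :
    (b.openedGraph π n).omega =
      (b.graphOf (Function.Embedding.refl _) π.toEmbedding).omega - 7 := by
  refine FGraph.omega_eq_sub_seven (σ := fun i => (b.edge i).trans π.symm)
    (φ := Function.Embedding.subtype (· ≠ n)) (l₀ := n) (fun i x x' => ?_) (fun i x x' => ?_)
    (Set.ext fun x => ⟨by rintro ⟨y, rfl⟩; exact y.2, fun hx => ⟨⟨x, hx⟩, rfl⟩⟩)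
  · exact (graphOf_nextRel _ _ i x x').trans (eq_comm.trans (Equiv.symm_apply_eq π).symm)
  · exact (graphOf_nextRel _ _ i _ _).trans
      (graphOf_nextRel (Function.Embedding.subtype (· ≠ n))
        ((Function.Embedding.subtype _).trans π.toEmbedding) i x x').symm

/-- Joining the two external legs of an optimal two-point graph gives a vacuum graph, and by
`omega_openedGraph` every way of reopening it is optimal again. -/
theorem exists_omega_openedGraph_eq {M : ℤ} (hM : IsMaxOmega2 b M) :
    ∃ π : b.B ≃ b.W, ∀ n, (b.openedGraph π n).omega = M := by
  obtain ⟨⟨r, hr, rfl⟩, -⟩ := hM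
  obtain ⟨f, g, hcard, hω⟩ := hr.exists_graphOf
  have hcardW : Fintype.card r.L + 1 = Fintype.card b.W := hcard.trans b.card_W_eq_card_B.symm
  obtain ⟨β, hβ⟩ : ∃ β, β ∉ Set.range f := by
    by_contra! h
    have := Fintype.card_le_of_surjective f fun x => h x
    omega
  obtain ⟨ϖ, hϖ⟩ : ∃ ϖ, ϖ ∉ Set.range g := by
    by_contra! h
    have := Fintype.card_le_of_surjective g fun x => h x
    omega
  -- `β` and `ϖ` carry the external legs; joining them closes the graph up
  let eB : Option r.L ≃ b.B := Equiv.ofBijective (f.optionElim β hβ)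
    ((Fintype.bijective_iff_injective_and_card _).2
      ⟨(f.optionElim β hβ).injective, by simp [hcard]⟩)
  let eW : Option r.L ≃ b.W := Equiv.ofBijective (g.optionElim ϖ hϖ)
    ((Fintype.bijective_iff_injective_and_card _).2
      ⟨(g.optionElim ϖ hϖ).injective, by simp [hcardW]⟩)
  refine ⟨eB.symm.trans eW, fun n => ?_⟩
  have hπ : ∀ l, (eB.symm.trans eW) (f l) = g l := fun l => by
    have hl : eB.symm (f l) = some l := eB.symm_apply_eq.2 rfl
    rw [Equiv.trans_apply, hl]
    rfl
  have hlines : Function.Bijective fun l : r.L =>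
      (⟨f l, fun h => hβ (h ▸ Set.mem_range_self l)⟩ : {x // x ≠ β}) := by
    refine ⟨fun l l' h => f.injective (congrArg Subtype.val h), fun ⟨x, hx⟩ => ?_⟩
    obtain ⟨o, rfl⟩ := eB.surjective x
    cases o with
    | none => exact absurd rfl hx
    | some l => exact ⟨l, rfl⟩
  have hβω : (b.openedGraph (eB.symm.trans eW) β).omega = r.omega := by
    rw [← hω]
    refine (FGraph.omega_eq_of_equiv (Equiv.ofBijective _ hlines) fun i l l' => ?_).symm
    refine ((graphOf_nextRel _ _ i _ _).trans ?_).trans (graphOf_nextRel f g i l l').symm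
    exact congrArg (· = b.edge i (f l)) (hπ l') |>.to_iff
  rw [omega_openedGraph, ← omega_openedGraph _ β, hβω]

end Bubble

lemma Fintype.card_subtype_ne_add_one {α : Type*} [Fintype α] [DecidableEq α] (a : α) :
    Fintype.card {x // x ≠ a} + 1 = Fintype.card α := by
  have := Fintype.card_pos_iff.2 ⟨a⟩
  simp only [Fintype.card_subtype_compl, Fintype.card_unique]
  omega

lemma IsConnSumAt.card_B_add_one {b₁ b₂ b₃ : Bubble} {n₁ : b₁.B} {n₂ : b₂.W}
    (hsum : IsConnSumAt b₃ b₁ b₂ n₁ n₂) :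
    Fintype.card b₃.B + 1 = Fintype.card b₁.B + Fintype.card b₂.B := by
  obtain ⟨eB, -, -⟩ := hsum
  rw [Fintype.card_congr eB, Fintype.card_sum, ← Fintype.card_subtype_ne_add_one n₁]
  omega

/-- The glued graph contains both graphs as line-disjoint subgraphs, so `F - R` is
superadditive while `L` is additive. -/
theorem IsConnSumAt.exists_isR2_omega_add_le {b₁ b₂ b₃ : Bubble} {n₁ : b₁.B} {n₂ : b₂.W}
    (hsum : IsConnSumAt b₃ b₁ b₂ n₁ n₂) {L₁ L₂ : Type} [Fintype L₁] [DecidableEq L₁]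
    [Fintype L₂] [DecidableEq L₂] (f₁ : L₁ ↪ b₁.B) (g₁ : L₁ ↪ b₁.W) (f₂ : L₂ ↪ b₂.B)
    (g₂ : L₂ ↪ b₂.W) (hf₁ : ∀ l, f₁ l ≠ n₁) (hg₂ : ∀ l, g₂ l ≠ n₂)
    (hL₁ : Fintype.card L₁ + 1 = Fintype.card b₁.B)
    (hL₂ : Fintype.card L₂ + 1 = Fintype.card b₂.B) :
    ∃ r, IsR2 r b₃ ∧ (b₁.graphOf f₁ g₁).omega + (b₂.graphOf f₂ g₂).omega ≤ r.omega := by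
  have hcard := hsum.card_B_add_one
  obtain ⟨eB, eW, hedge⟩ := hsum
  have hedge' : ∀ i z a,
      eW.symm a = b₃.edge i (eB.symm z) ↔ a = connSumEdge b₁ b₂ n₁ n₂ i z :=
    fun i z a => by rw [Equiv.symm_apply_eq, hedge, Equiv.apply_symm_apply]
  let f₃ : L₁ ⊕ L₂ ↪ b₃.B := (Function.Embedding.sumMap
    ⟨fun l => ⟨f₁ l, hf₁ l⟩, fun _ _ h => f₁.injective (congrArg Subtype.val h)⟩ f₂).trans
    eB.symm.toEmbedding
  let g₃ : L₁ ⊕ L₂ ↪ b₃.W := (Function.Embedding.sumMap g₁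
    ⟨fun l => ⟨g₂ l, hg₂ l⟩, fun _ _ h => g₂.injective (congrArg Subtype.val h)⟩).trans
    eW.symm.toEmbedding
  let G₃ := b₃.graphOf f₃ g₃
  have hφ₁ : FGraph.NextEmb (G := b₁.graphOf f₁ g₁) (H := G₃) Function.Embedding.inl :=
    fun i l l' => ((Bubble.graphOf_nextRel _ _ i _ _).trans (hedge' _ _ _)).trans
      (Sum.inl_injective.eq_iff.trans (Bubble.graphOf_nextRel f₁ g₁ i l l').symm)
  have hφ₂ : FGraph.NextEmb (G := b₂.graphOf f₂ g₂) (H := G₃) Function.Embedding.inr := by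
    intro i l l'
    refine ((Bubble.graphOf_nextRel _ _ i _ _).trans (hedge' _ _ _)).trans
      (Iff.trans ?_ (Bubble.graphOf_nextRel f₂ g₂ i l l').symm)
    change Sum.inr ⟨g₂ l', hg₂ l'⟩ = connSumEdge b₁ b₂ n₁ n₂ i (Sum.inr (f₂ l)) ↔
      g₂ l' = b₂.edge i (f₂ l)
    by_cases h : b₂.edge i (f₂ l) = n₂
    · simp only [connSumEdge, dif_pos h, reduceCtorEq, false_iff]
      exact fun h' => hg₂ l' (h'.trans h)
    · simp only [connSumEdge, dif_neg h, Sum.inr.injEq, Subtype.mk.injEq]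
  have hFR := FGraph.numF_sub_numR_add_le hφ₁ hφ₂ Set.isCompl_range_inl_range_inr.disjoint
  have hL : G₃.numL = (b₁.graphOf f₁ g₁).numL + (b₂.graphOf f₂ g₂).numL := Fintype.card_sum
  refine ⟨G₃, Bubble.isR2_graphOf f₃ g₃ ?_, ?_⟩
  · rw [Fintype.card_sum]
    omega
  · simp only [FGraph.omega, hL]
    push_cast
    omega

/-- **Lemma 1 (connected sums and bubble dimensions).**
If `b₃` is a connected sum of `b₁` and `b₂`, then the bubble dimensions
satisfy `d̃_{b₁} + d̃_{b₂} ≥ d̃_{b₃} + 2`. -/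
theorem connSum_bubbleDim (b₁ b₂ b₃ : Bubble) (n₁ : b₁.B) (n₂ : b₂.W)
    (hsum : IsConnSumAt b₃ b₁ b₂ n₁ n₂)
    (d₁ d₂ d₃ : ℤ) (h₁ : HasBubbleDim b₁ d₁) (h₂ : HasBubbleDim b₂ d₂)
    (h₃ : HasBubbleDim b₃ d₃) :
    d₃ + 2 ≤ d₁ + d₂ := by
  obtain ⟨M₁, hM₁, rfl⟩ := h₁
  obtain ⟨M₂, hM₂, rfl⟩ := h₂
  obtain ⟨M₃, hM₃, rfl⟩ := h₃
  obtain ⟨π₁, hπ₁⟩ := Bubble.exists_omega_openedGraph_eq hM₁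
  obtain ⟨π₂, hπ₂⟩ := Bubble.exists_omega_openedGraph_eq hM₂
  -- the external legs sit at the black node `n₁` of `b₁` and at the white node `n₂` of `b₂`
  obtain ⟨r, hr, hle⟩ := hsum.exists_isR2_omega_add_le
    (Function.Embedding.subtype (· ≠ n₁)) ((Function.Embedding.subtype _).trans π₁.toEmbedding)
    (Function.Embedding.subtype (· ≠ π₂.symm n₂))
    ((Function.Embedding.subtype _).trans π₂.toEmbedding) (fun x => x.2)
    (fun x h => x.2 (π₂.symm_apply_eq.2 h.symm).symm)
    (Fintype.card_subtype_ne_add_one n₁) (Fintype.card_subtype_ne_add_one _)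
  rw [hπ₁, hπ₂] at hle
  linarith [hM₃.2 r hr]
end

section
/- The truncated renormalization group flow admits a line of fixed points through the Gaussian fixed point: for every s ∈ ℝ, at the point (u₂, u₄, u_{6,1}, u_{6,2}) = (0, 0, s, −s/4) one has β₂ = β₄ = β_{6,1} = β_{6,2} = 0. -/
/-!  The truncated functional renormalization group flow of the rank-4
`SU(2)` group field theory in the `φ⁶` necklace truncation
(Carrozza–Lahoche–Oriti). -/

open Real MeasureTheory

/-- The loop integral `f_k(u₂)`. -/
noncomputable def fInt (k : ℕ) (u : ℝ) : ℝ :=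
  2 * Real.sqrt 2 * ∫ x in Set.Ioi (0 : ℝ),
    x ^ 6 * Real.exp (-x ^ 2) * (1 - Real.exp (-x ^ 2)) ^ (k - 1) /
      (x ^ 2 + u * (1 - Real.exp (-x ^ 2))) ^ (k + 1)

/-- The loop integral `g_k(u₂)`. -/
noncomputable def gInt (k : ℕ) (u : ℝ) : ℝ :=
  2 * Real.sqrt 2 * ∫ x in Set.Ioi (0 : ℝ),
    x ^ 4 * Real.exp (-x ^ 2) * (1 - Real.exp (-x ^ 2)) ^ k /
      (x ^ 2 + u * (1 - Real.exp (-x ^ 2))) ^ (k + 1)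

/-- The wave-function integral `f_w(u₂)`. -/
noncomputable def fw (u : ℝ) : ℝ :=
  9 * Real.sqrt 2 * ∫ x in Set.Ioi (0 : ℝ),
    Real.exp (-x ^ 2) * (x ^ 2 / (x ^ 2 + u * (1 - Real.exp (-x ^ 2)))) ^ 2

/-- The wave-function integral `g_w(u₂)`. -/
noncomputable def gw (u : ℝ) : ℝ :=
  9 * Real.sqrt 2 * ∫ x in Set.Ioi (0 : ℝ),
    Real.exp (-x ^ 2) * (1 - Real.exp (-x ^ 2)) *
      (x / (x ^ 2 + u * (1 - Real.exp (-x ^ 2)))) ^ 2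

/-- The anomalous dimension `η(u₂, u₄)`. -/
noncomputable def eta (u2 u4 : ℝ) : ℝ := fw u2 * u4 / (1 - gw u2 * u4 / 2)

/-- The loop coefficient `L_k(u₂, u₄) = 2 f_k(u₂) + η g_k(u₂)`. -/
noncomputable def Lk (k : ℕ) (u2 u4 : ℝ) : ℝ :=
  2 * fInt k u2 + eta u2 u4 * gInt k u2

/-- The beta function `β₂`. -/
noncomputable def beta2 (u2 u4 : ℝ) : ℝ :=
  -(2 + eta u2 u4) * u2 - 6 * Lk 1 u2 u4 * u4

/-- The beta function `β₄`. -/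
noncomputable def beta4 (u2 u4 u61 u62 : ℝ) : ℝ :=
  -(1 + 2 * eta u2 u4) * u4 - 4 * Lk 1 u2 u4 * (u61 + 4 * u62) +
    4 * Lk 2 u2 u4 * u4 ^ 2

/-- The beta function `β_{6,1}`. -/
noncomputable def beta61 (u2 u4 u61 : ℝ) : ℝ :=
  -3 * eta u2 u4 * u61 + 12 * Lk 2 u2 u4 * u4 * u61 - 6 * Lk 3 u2 u4 * u4 ^ 3

/-- The beta function `β_{6,2}`. -/
noncomputable def beta62 (u2 u4 u62 : ℝ) : ℝ :=
  -3 * eta u2 u4 * u62 + 8 * Lk 2 u2 u4 * u4 * u62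

/-- The truncated flow `(u₂, u₄, u_{6,1}, u_{6,2}) ↦ (β₂, β₄, β_{6,1}, β_{6,2})`. -/
noncomputable def betaMap : (Fin 4 → ℝ) → (Fin 4 → ℝ) := fun u =>
  ![beta2 (u 0) (u 1), beta4 (u 0) (u 1) (u 2) (u 3),
    beta61 (u 0) (u 1) (u 2), beta62 (u 0) (u 1) (u 3)]

/-- **Line of fixed points through the Gaussian fixed point.**
For every `s ∈ ℝ`, the point `(u₂, u₄, u_{6,1}, u_{6,2}) = (0, 0, s, -s/4)`
is a zero of all four truncated beta functions. -/
theorem line_of_fixed_points (s : ℝ) :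
    beta2 0 0 = 0 ∧ beta4 0 0 s (-s / 4) = 0 ∧ beta61 0 0 s = 0 ∧
      beta62 0 0 (-s / 4) = 0 := by
  have he : eta 0 0 = 0 := by simp [eta]
  refine ⟨?_, ?_, ?_, ?_⟩ <;> simp only [beta2, beta4, beta61, beta62, he] <;> ring
end
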